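/- arXiv:1808.09439 — 3 statements merged into one kernel-verified Lean document; each statement's English description precedes it below -/
import Mathlib

section
/- Let k be a field and let a₀, …, a_d be d+1 distinct elements of k. Define T = { (aᵢ, aⱼ) : 0 ≤ j ≤ i ≤ d } ⊆ k². If Q(x,y) is a polynomial over k of total degree at most d that vanishes at every point of T, then Q = 0. -/
/-!
Induction on the number of points. On the line `x = c` with `c` the last point, `Q` restricts to a
polynomial in `y` of degree less than the number of points `a j`, all of which are roots, so the
restriction vanishes and `x - c` divides `Q`. The quotient has smaller degree and still vanishes
on the remaining triangle, because `x - c` does not vanish there.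
-/

open MvPolynomial Finset

namespace MvPolynomial

section Restriction

variable {R : Type*} [CommRing R] {n : ℕ}

theorem totalDegree_eval_C_finSuccEquiv_le (Q : MvPolynomial (Fin (n + 1)) R) (c : R) :
    ((finSuccEquiv R n Q).eval (C c)).totalDegree ≤ Q.totalDegree := by
  rw [Polynomial.eval_eq_sum, Polynomial.sum_def]
  refine totalDegree_finsetSum_le fun i hi => (totalDegree_mul _ _).trans ?_
  have hcoeff := totalDegree_coeff_finSuccEquiv_add_le Q i (Polynomial.mem_support_iff.mp hi)
  rw [← map_pow, totalDegree_C]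
  omega

theorem eval_eval_C_finSuccEquiv (Q : MvPolynomial (Fin (n + 1)) R) (c : R) (x : Fin n → R) :
    eval x ((finSuccEquiv R n Q).eval (C c)) = eval (Fin.cons c x) Q := by
  rw [eval_eq_eval_mv_eval', Polynomial.eval_map, ← Polynomial.eval₂_id, Polynomial.hom_eval₂,
    eval_C]
  rfl

theorem X_zero_sub_C_dvd_of_eval_C_finSuccEquiv_eq_zero {Q : MvPolynomial (Fin (n + 1)) R}
    {c : R} (hQ : (finSuccEquiv R n Q).eval (C c) = 0) : X 0 - C c ∣ Q := by
  obtain ⟨G, hG⟩ := Polynomial.dvd_iff_isRoot.mpr hQ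
  refine ⟨(finSuccEquiv R n).symm G, (finSuccEquiv R n).injective ?_⟩
  rw [hG, map_mul, AlgEquiv.apply_symm_apply, map_sub, finSuccEquiv_X_zero]
  congr 2
  exact ((finSuccEquiv R n).commutes c).symm

theorem X_zero_sub_C_dvd_of_eval_cons_eq_zero [IsDomain R] {Q : MvPolynomial (Fin (n + 1)) R}
    {c : R} (S : Fin n → Finset R) (hdeg : ∀ i, Q.totalDegree < #(S i))
    (hQ : ∀ x : Fin n → R, (∀ i, x i ∈ S i) → eval (Fin.cons c x) Q = 0) : X 0 - C c ∣ Q := by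
  refine X_zero_sub_C_dvd_of_eval_C_finSuccEquiv_eq_zero
    (eq_zero_of_eval_zero_at_prod_finset _ S (fun i => ?_) fun x hx => ?_)
  · exact ((degreeOf_le_totalDegree _ i).trans (totalDegree_eval_C_finSuccEquiv_le Q c)).trans_lt
      (hdeg i)
  · rw [eval_eval_C_finSuccEquiv, hQ x hx]

end Restriction

theorem totalDegree_X_sub_C {R σ : Type*} [CommRing R] [Nontrivial R] (i : σ) (c : R) :
    (X i - C c : MvPolynomial σ R).totalDegree = 1 := by
  rw [sub_eq_add_neg, ← map_neg, totalDegree_add_eq_left_of_totalDegree_lt] <;>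
    simp [totalDegree_X]

theorem totalDegree_lt_totalDegree_X_sub_C_mul {R σ : Type*} [CommRing R] [IsDomain R] (i : σ)
    (c : R) {P : MvPolynomial σ R} (hP : P ≠ 0) :
    P.totalDegree < ((X i - C c) * P).totalDegree := by
  have hX : X i - C c ≠ 0 := fun h => by simpa [h] using totalDegree_X_sub_C (R := R) i c
  rw [totalDegree_mul_of_isDomain hX hP, totalDegree_X_sub_C]
  omega

theorem eq_zero_of_eval_triangle_eq_zero {R : Type*} [CommRing R] [IsDomain R] {n : ℕ}
    {a : Fin n → R} (ha : Function.Injective a) {Q : MvPolynomial (Fin 2) R}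
    (hdeg : Q.totalDegree < n) (hQ : ∀ i j, j ≤ i → eval ![a i, a j] Q = 0) : Q = 0 := by
  induction n generalizing Q with
  | zero => omega
  | succ n ih =>
    set c := a (Fin.last n)
    obtain ⟨P, rfl⟩ : X 0 - C c ∣ Q := by
      refine X_zero_sub_C_dvd_of_eval_cons_eq_zero (fun _ => univ.map ⟨a, ha⟩)
        (fun _ => by rwa [card_map, card_fin]) fun x hx => ?_
      obtain ⟨j, -, hj⟩ := mem_map.mp (hx 0)
      have hcons : Fin.cons c x = ![a (Fin.last n), a j] := by
        ext i; fin_cases i <;> simp [c, ← hj]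
      rw [hcons]
      exact hQ _ j (Fin.le_last j)
    by_cases hP : P = 0
    · rw [hP, mul_zero]
    have hdegP := totalDegree_lt_totalDegree_X_sub_C_mul 0 c hP
    rw [ih (Q := P) (ha.comp (Fin.castSucc_injective n)) (by omega) fun i j hij => ?_, mul_zero]
    have hne : a i.castSucc - c ≠ 0 :=
      sub_ne_zero.mpr fun h => (Fin.castSucc_lt_last i).ne (ha h)
    simpa [hne] using hQ i.castSucc j.castSucc (Fin.castSucc_le_castSucc_iff.mpr hij)

end MvPolynomial

/-- If `a₀,…,a_d` are `d+1` distinct elements of a field `k` and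
`Q(x,y)` is a polynomial of total degree at most `d` vanishing at every point
`(aᵢ, aⱼ)` with `0 ≤ j ≤ i ≤ d`, then `Q = 0`. -/
theorem stmt_2 {k : Type*} [Field k] (d : ℕ) (a : Fin (d + 1) → k)
    (hinj : Function.Injective a)
    (Q : MvPolynomial (Fin 2) k) (hdeg : Q.totalDegree ≤ d)
    (hvan : ∀ i j : Fin (d + 1), j ≤ i → MvPolynomial.eval ![a i, a j] Q = 0) :
    Q = 0 :=
  MvPolynomial.eq_zero_of_eval_triangle_eq_zero hinj (Nat.lt_succ_of_le hdeg) hvan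
end

section
/- Let k be a finite field with |k| = q > a, let X ⊆ V be a subset of a k-vector space V that is closed under scalar multiplication (homogeneous), and let f : X → k be the restriction to X of a polynomial function of degree ≤ a on V. If f is weakly polynomial of degree ≤ a−1 on X (its restriction to every affine subspace contained in X is a polynomial of degree ≤ a−1), then f is the restriction of a polynomial of degree ≤ a−1 on V. -/
/-- A function `f` on a subset `X` of `k^n` is weakly polynomial of degree `≤ b`
if its restriction to every affine subspace contained in `X` (given by an injective
affine parametrization) is a polynomial of degree `≤ b`. -/
def IsWeaklyPoly {k : Type*} [Field k] {n : ℕ} (X : Set (Fin n → k))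
    (f : (Fin n → k) → k) (b : ℕ) : Prop :=
  ∀ (m : ℕ) (φ : (Fin m → k) →ᵃ[k] (Fin n → k)), Function.Injective φ →
    Set.range φ ⊆ X →
    ∃ Q : MvPolynomial (Fin m) k, Q.totalDegree ≤ b ∧
      ∀ x : Fin m → k, f (φ x) = MvPolynomial.eval x Q

open MvPolynomial

private lemma eval_smul_homog {k : Type*} [CommRing k] {n d : ℕ} (P : MvPolynomial (Fin n) k)
    (hP : P.IsHomogeneous d) (t : k) (x : Fin n → k) :
    eval (t • x) P = t ^ d * eval x P := by
  rw [eval_eq', eval_eq', Finset.mul_sum]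
  refine Finset.sum_congr rfl fun m hm => ?_
  have hs : ∑ i, m i = d := by
    have := hP (mem_support_iff.mp hm)
    rw [Finsupp.weight_apply] at this
    rw [← this, Finsupp.sum_fintype] <;> simp
  simp only [Pi.smul_apply, smul_eq_mul, mul_pow]
  rw [Finset.prod_mul_distrib, Finset.prod_pow_eq_pow_sum, hs]
  ring


/-- over a finite field with `q > a` elements, if `X ⊆ V` is closed
under scalar multiplication and `f : X → k` is the restriction of a polynomial of
degree `≤ a` which is weakly polynomial of degree `≤ a − 1` on `X`, then `f`
extends to a polynomial of degree `≤ a − 1` on `V`. -/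
theorem stmt_3 {k : Type*} [Field k] [Fintype k] (q a n : ℕ)
    (hq : Fintype.card k = q) (hqa : a < q)
    (X : Set (Fin n → k)) (hX : ∀ (t : k), ∀ x ∈ X, t • x ∈ X)
    (F : MvPolynomial (Fin n) k) (hdeg : F.totalDegree ≤ a)
    (f : (Fin n → k) → k) (hf : ∀ x ∈ X, f x = MvPolynomial.eval x F)
    (hweak : IsWeaklyPoly X f (a - 1)) :
    ∃ G : MvPolynomial (Fin n) k, G.totalDegree ≤ a - 1 ∧
      ∀ x ∈ X, f x = MvPolynomial.eval x G := by
  rcases Nat.eq_zero_or_pos a with ha0 | ha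
  · exact ⟨F, by simpa [ha0] using hdeg, hf⟩
  set Q := homogeneousComponent a F with hQdef
  set G := ∑ i ∈ Finset.range a, homogeneousComponent i F with hGdef
  have hGdeg : G.totalDegree ≤ a - 1 := by
    refine (totalDegree_finset_sum _ _).trans (Finset.sup_le fun i hi => ?_)
    exact le_trans (homogeneousComponent_isHomogeneous i F).totalDegree_le
      (by have := Finset.mem_range.mp hi; omega)
  have hFsum : F = ∑ i ∈ Finset.range (a + 1), homogeneousComponent i F := by
    conv_lhs => rw [← sum_homogeneousComponent F]
    exact Finset.sum_subset (Finset.range_subset_range.mpr (by omega))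
      (fun i _ hi => homogeneousComponent_eq_zero _ _
        (by have := Finset.mem_range.not.mp hi; omega))
  have hFG : ∀ y : Fin n → k, eval y F = eval y G + eval y Q := by
    intro y
    conv_lhs => rw [hFsum]
    rw [Finset.sum_range_succ, map_add, hGdef, map_sum]
  have hQ0 : ∀ x ∈ X, eval x Q = 0 := by
    intro x hx
    by_cases hx0 : x = 0
    · have := eval_smul_homog Q (homogeneousComponent_isHomogeneous a F) (0 : k) x
      simpa [hx0, zero_pow ha.ne'] using this
    · -- the line through 0 and x
      set φ : (Fin 1 → k) →ᵃ[k] (Fin n → k) :=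
        ((LinearMap.proj 0 : (Fin 1 → k) →ₗ[k] k).smulRight x).toAffineMap with hφdef
      have hφ : ∀ c : Fin 1 → k, φ c = c 0 • x := fun c => rfl
      have hinj : Function.Injective φ := by
        intro c c' h
        rw [hφ, hφ] at h
        have h0 : c 0 = c' 0 := smul_left_injective k hx0 h
        funext i
        rw [Fin.eq_zero i, h0]
      have hrange : Set.range φ ⊆ X := by
        rintro _ ⟨c, rfl⟩
        rw [hφ]
        exact hX _ x hx
      obtain ⟨Q', hQ'deg, hQ'⟩ := hweak 1 φ hinj hrange
      -- the univariate polynomial from Q'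
      set r : Polynomial k := ∑ m ∈ Q'.support, Polynomial.C (coeff m Q') * Polynomial.X ^ (m 0)
        with hrdef
      have hrev : ∀ t : k, r.eval t = eval (fun _ => t) Q' := by
        intro t
        rw [eval_eq', hrdef, Polynomial.eval_finset_sum]
        refine Finset.sum_congr rfl fun m _ => ?_
        simp [Fin.prod_univ_one]
      have hm0 : ∀ m ∈ Q'.support, m 0 ≤ a - 1 := by
        intro m hm
        refine le_trans ?_ (le_trans (le_totalDegree hm) hQ'deg)
        rw [Finsupp.sum_fintype _ _ (fun _ => rfl), Fin.sum_univ_one]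
      have hrdeg : r.natDegree ≤ a - 1 := by
        refine Polynomial.natDegree_sum_le_of_forall_le _ _ fun m hm => ?_
        exact le_trans (Polynomial.natDegree_C_mul_le _ _)
          (by simpa using hm0 m hm)
      -- the univariate polynomial from F
      set p : Polynomial k := ∑ i ∈ Finset.range (a + 1),
          Polynomial.C (eval x (homogeneousComponent i F)) * Polynomial.X ^ i with hpdef
      have hpev : ∀ t : k, p.eval t = eval (t • x) F := by
        intro t
        conv_rhs => rw [hFsum]
        rw [map_sum, hpdef, Polynomial.eval_finset_sum]
        refine Finset.sum_congr rfl fun i _ => ?_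
        rw [eval_smul_homog _ (homogeneousComponent_isHomogeneous i F) t x,
          Polynomial.eval_mul, Polynomial.eval_C, Polynomial.eval_pow, Polynomial.eval_X,
          mul_comm]
      have hpdeg : p.natDegree ≤ a := by
        refine Polynomial.natDegree_sum_le_of_forall_le _ _ fun i hi => ?_
        exact le_trans (Polynomial.natDegree_C_mul_le _ _)
          (by simpa using Nat.lt_succ_iff.mp (Finset.mem_range.mp hi))
      have hzero : p - r = 0 := by
        refine Polynomial.eq_zero_of_natDegree_lt_card_of_eval_eq_zero _
          Function.injective_id (fun t => ?_) ?_
        · rw [Polynomial.eval_sub, hpev, hrev, sub_eq_zero, id]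
          have hmem : t • x ∈ X := hX t x hx
          rw [← hf _ hmem, ← hQ' (fun _ => t), hφ]
        · calc (p - r).natDegree ≤ max p.natDegree r.natDegree :=
                Polynomial.natDegree_sub_le _ _
            _ ≤ a := by omega
            _ < Fintype.card k := by omega
      have hpr : p = r := by rwa [sub_eq_zero] at hzero
      have hcoeff : p.coeff a = eval x Q := by
        rw [hpdef, Polynomial.finset_sum_coeff]
        simp only [Polynomial.coeff_C_mul, Polynomial.coeff_X_pow, mul_ite, mul_one, mul_zero]
        rw [Finset.sum_ite_eq (Finset.range (a + 1))]
        simp [hQdef]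
      rw [← hcoeff, hpr]
      exact Polynomial.coeff_eq_zero_of_natDegree_lt (by omega)
  exact ⟨G, hGdeg, fun x hx => by rw [hf x hx, hFG x, hQ0 x hx, add_zero]⟩
end

section
/- Let k be a finite field of q elements, char(k) = p > d, V a finite-dimensional k-vector space, P : V → k a polynomial of degree ≤ d, and W ⊆ V an affine subspace of codimension s. Then the Schmidt rank of the restriction P|_W is at least r(P) − s. -/
/-!
An affine change of coordinates `x ↦ T x + c` preserves total degrees, hence Schmidt
decompositions, so we may assume that `W` is the coordinate subspace `x'' = 0`, where
`x = (x', x'')` with `x''` the last `s` coordinates. Every monomial either involves only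
`x'`, or is divisible by some coordinate of `x''`; hence `P = P|_W (x') + Σₜ x''ₜ Gₜ` with
`deg Gₜ < deg P ≤ d`. For `d ≥ 2` the `s` products `x''ₜ Gₜ` are admissible in a Schmidt
decomposition, so `r(P) ≤ r(P|_W) + s`. For `d ≤ 1` a decomposable polynomial is constant.
-/

/-- The Schmidt rank (relative to degree `d`) of a polynomial: the minimal `r`
such that `P = Σ_{i=1}^r Q_i R_i` with `deg Q_i, deg R_i < d`. -/
noncomputable def schmidtRank {k : Type*} [CommRing k] {σ : Type*} (d : ℕ)
    (P : MvPolynomial σ k) : ℕ :=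
  sInf {r : ℕ | ∃ Q R : Fin r → MvPolynomial σ k,
    (∀ i, (Q i).totalDegree < d ∧ (R i).totalDegree < d) ∧ P = ∑ i, Q i * R i}

open MvPolynomial

theorem totalDegree_aeval_le_of_totalDegree_le_one {R σ τ : Type*} [CommSemiring R]
    {w : σ → MvPolynomial τ R} (hw : ∀ i, (w i).totalDegree ≤ 1) (p : MvPolynomial σ R) :
    (aeval w p).totalDegree ≤ p.totalDegree := by
  conv_lhs => rw [p.as_sum, map_sum]
  refine (totalDegree_finsetSum _ _).trans (Finset.sup_le fun μ hμ => ?_)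
  rw [aeval_monomial, ← C_eq_algebraMap]
  refine (totalDegree_mul _ _).trans ?_
  rw [totalDegree_C, zero_add, Finsupp.prod]
  calc (∏ i ∈ μ.support, w i ^ μ i).totalDegree
      ≤ ∑ i ∈ μ.support, (w i ^ μ i).totalDegree := totalDegree_finsetProd _ _
    _ ≤ ∑ i ∈ μ.support, μ i :=
        Finset.sum_le_sum fun i _ =>
          (totalDegree_pow _ _).trans (by simpa using Nat.mul_le_mul_left (μ i) (hw i))
    _ ≤ p.totalDegree := le_totalDegree hμ

theorem LinearMap.apply_eq_sum_mul_single {k ι κ : Type*} [CommRing k] [Fintype ι]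
    [DecidableEq ι] (f : (ι → k) →ₗ[k] (κ → k)) (x : ι → k) (i : κ) :
    f x i = ∑ j, x j * f (Pi.single j 1) i := by
  conv_lhs => rw [← Finset.univ_sum_single x]
  simp only [map_sum, Finset.sum_apply]
  refine Finset.sum_congr rfl fun j _ => ?_
  rw [← smul_eq_mul, ← Pi.smul_apply, ← map_smul, ← Pi.single_smul', smul_eq_mul, mul_one]

theorem LinearMap.exists_linearEquiv_comp_eq {K V W : Type*} [DivisionRing K] [AddCommGroup V]
    [Module K V] [AddCommGroup W] [Module K W] [FiniteDimensional K W] {f g : V →ₗ[K] W}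
    (hf : Function.Injective f) (hg : Function.Injective g) :
    ∃ e : W ≃ₗ[K] W, e.toLinearMap ∘ₗ f = g := by
  obtain ⟨Cf, hCf⟩ := Submodule.exists_isCompl (LinearMap.range f)
  obtain ⟨Cg, hCg⟩ := Submodule.exists_isCompl (LinearMap.range g)
  have : FiniteDimensional K V := Module.Finite.of_injective f hf
  have hrank : Module.finrank K Cf = Module.finrank K Cg := by
    have hf' := Submodule.finrank_add_eq_of_isCompl hCf
    have hg' := Submodule.finrank_add_eq_of_isCompl hCg
    rw [LinearMap.finrank_range_of_inj hf] at hf'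
    rw [LinearMap.finrank_range_of_inj hg] at hg'
    omega
  let e : LinearMap.range f ≃ₗ[K] LinearMap.range g :=
    (LinearEquiv.ofInjective f hf).symm.trans (LinearEquiv.ofInjective g hg)
  refine ⟨(Submodule.prodEquivOfIsCompl _ _ hCf).symm.trans
    ((e.prodCongr (LinearEquiv.ofFinrankEq _ _ hrank)).trans
      (Submodule.prodEquivOfIsCompl _ _ hCg)), ?_⟩
  ext x
  have hx := Submodule.prodEquivOfIsCompl_symm_apply_left _ _ hCf
    (LinearEquiv.ofInjective f hf x)
  simp only [LinearMap.comp_apply, LinearEquiv.coe_coe, LinearEquiv.trans_apply,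
    LinearEquiv.ofInjective_apply] at hx ⊢
  rw [hx]
  simp [e]

section AffineSubst

variable {k ι κ ν : Type*} [CommRing k] [Fintype ι] [DecidableEq ι]

/-- `aeval (affineSubst f c) P` is the polynomial `x ↦ P (f x + c)`. -/
noncomputable def affineSubst (f : (ι → k) →ₗ[k] (κ → k)) (c : κ → k) :
    κ → MvPolynomial ι k :=
  fun i => ∑ j, C (f (Pi.single j 1) i) * X j + C (c i)

theorem totalDegree_affineSubst_le (f : (ι → k) →ₗ[k] (κ → k)) (c : κ → k) (i : κ) :
    (affineSubst f c i).totalDegree ≤ 1 := by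
  refine (totalDegree_add _ _).trans (max_le ?_ (by simp))
  refine (totalDegree_finsetSum _ _).trans (Finset.sup_le fun j _ => ?_)
  rw [C_mul_X_eq_monomial]
  exact (totalDegree_monomial_le _ _).trans (by simp)

theorem totalDegree_aeval_affineSubst_le (f : (ι → k) →ₗ[k] (κ → k)) (c : κ → k)
    (p : MvPolynomial κ k) : (aeval (affineSubst f c) p).totalDegree ≤ p.totalDegree :=
  totalDegree_aeval_le_of_totalDegree_le_one (totalDegree_affineSubst_le f c) p

theorem aeval_affineSubst [Fintype ν] [DecidableEq ν] (f : (ι → k) →ₗ[k] (κ → k)) (c : κ → k)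
    (g : (ν → k) →ₗ[k] (ι → k)) (c' : ι → k) (i : κ) :
    aeval (affineSubst g c') (affineSubst f c i) = affineSubst (f ∘ₗ g) (f c' + c) i := by
  simp only [affineSubst, map_add, map_sum, map_mul, aeval_C, aeval_X, algebraMap_eq,
    LinearMap.comp_apply, Pi.add_apply, f.apply_eq_sum_mul_single (g _),
    f.apply_eq_sum_mul_single c', mul_add, Finset.sum_add_distrib, Finset.mul_sum, map_sum,
    Finset.sum_mul]
  rw [Finset.sum_comm]
  simp only [mul_comm, mul_left_comm, add_assoc]

theorem aeval_aeval_affineSubst [Fintype ν] [DecidableEq ν] (f : (ι → k) →ₗ[k] (κ → k))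
    (c : κ → k) (g : (ν → k) →ₗ[k] (ι → k)) (c' : ι → k) (p : MvPolynomial κ k) :
    aeval (affineSubst g c') (aeval (affineSubst f c) p) =
      aeval (affineSubst (f ∘ₗ g) (f c' + c)) p := by
  rw [← AlgHom.comp_apply, comp_aeval]
  simp only [aeval_affineSubst]

theorem affineSubst_id_zero : affineSubst (LinearMap.id : (ι → k) →ₗ[k] (ι → k)) 0 = X := by
  funext i
  simp [affineSubst, Pi.single_apply]

theorem aeval_affineSubst_symm_aeval_affineSubst (T : (ι → k) ≃ₗ[k] (ι → k)) (c : ι → k)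
    (p : MvPolynomial ι k) :
    aeval (affineSubst T.symm.toLinearMap (-T.symm c))
      (aeval (affineSubst T.toLinearMap c) p) = p := by
  rw [aeval_aeval_affineSubst, T.comp_symm]
  simp [affineSubst_id_zero]

end AffineSubst

section Blocks

variable {R : Type*} [CommSemiring R] {m s : ℕ}

theorem exists_monomial_eq_rename_castAdd_add_sum_X_natAdd_mul (μ : Fin (m + s) →₀ ℕ) (a : R) :
    ∃ (F₀ : MvPolynomial (Fin m) R) (G : Fin s → MvPolynomial (Fin (m + s)) R),
      monomial μ a = rename (Fin.castAdd s) F₀ + ∑ t, X (Fin.natAdd m t) * G t ∧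
      ∀ t, (G t).totalDegree ≤ (μ.sum fun _ e => e) - 1 := by
  classical
  by_cases h : ∃ t, μ (Fin.natAdd m t) ≠ 0
  · obtain ⟨t, ht⟩ := h
    set ν := μ - Finsupp.single (Fin.natAdd m t) 1
    have hμ : Finsupp.single (Fin.natAdd m t) 1 + ν = μ :=
      add_tsub_cancel_of_le (Finsupp.single_le_iff.mpr (by omega))
    refine ⟨0, Pi.single t (monomial ν a), ?_, fun t' => ?_⟩
    · rw [map_zero, zero_add, Fintype.sum_eq_single t fun t' ht' => by simp [ht'],
        Pi.single_eq_same, ← pow_one (X _), ← monomial_single_add, hμ]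
    · rcases eq_or_ne t' t with rfl | hne
      · have hsum : (μ.sum fun _ e => e) = 1 + ν.sum fun _ e => e := by
          rw [← hμ, Finsupp.sum_add_index' (fun _ => rfl) (fun _ _ _ => rfl),
            Finsupp.sum_single_index rfl]
        rw [Pi.single_eq_same, hsum, Nat.add_sub_cancel_left]
        exact totalDegree_monomial_le ν a
      · simp [hne]
  · simp only [not_exists, not_not] at h
    refine ⟨monomial (μ.comapDomain (Fin.castAdd s) (Fin.castAdd_injective m s).injOn) a, 0,
      ?_, by simp⟩
    rw [rename_monomial, Finsupp.mapDomain_comapDomain _ (Fin.castAdd_injective m s)]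
    · simp
    · intro i hi
      induction i using Fin.addCases with
      | left j => exact ⟨j, rfl⟩
      | right t => exact absurd (h t) (Finsupp.mem_support_iff.mp hi)

theorem exists_eq_rename_castAdd_add_sum_X_natAdd_mul (F : MvPolynomial (Fin (m + s)) R) :
    ∃ (F₀ : MvPolynomial (Fin m) R) (G : Fin s → MvPolynomial (Fin (m + s)) R),
      F = rename (Fin.castAdd s) F₀ + ∑ t, X (Fin.natAdd m t) * G t ∧
      ∀ t, (G t).totalDegree ≤ F.totalDegree - 1 := by
  nth_rw 1 [F.as_sum]
  refine Finset.sum_induction _ (fun F' => ∃ (F₀ : MvPolynomial (Fin m) R)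
      (G : Fin s → MvPolynomial (Fin (m + s)) R),
      F' = rename (Fin.castAdd s) F₀ + ∑ t, X (Fin.natAdd m t) * G t ∧
      ∀ t, (G t).totalDegree ≤ F.totalDegree - 1) ?_ ⟨0, 0, by simp, by simp⟩ ?_
  · rintro _ _ ⟨F₁, G₁, rfl, hG₁⟩ ⟨F₂, G₂, rfl, hG₂⟩
    refine ⟨F₁ + F₂, G₁ + G₂, ?_, fun t => ?_⟩
    · simp only [map_add, Pi.add_apply, mul_add, Finset.sum_add_distrib]
      ring
    · exact (totalDegree_add _ _).trans (max_le (hG₁ t) (hG₂ t))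
  · intro μ hμ
    obtain ⟨F₀, G, hF, hG⟩ := exists_monomial_eq_rename_castAdd_add_sum_X_natAdd_mul μ (F.coeff μ)
    exact ⟨F₀, G, hF, fun t => (hG t).trans (Nat.sub_le_sub_right (le_totalDegree hμ) 1)⟩

end Blocks

section ExtendByZero

variable {k : Type*} [CommRing k] {m s : ℕ}

theorem affineSubst_extendByZero_castAdd (j : Fin m) :
    affineSubst (Function.ExtendByZero.linearMap k (Fin.castAdd s)) 0 (Fin.castAdd s j) =
      X j := by
  simp [affineSubst, (Fin.castAdd_injective m s).extend_apply, Pi.single_apply]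

theorem affineSubst_extendByZero_natAdd (t : Fin s) :
    affineSubst (Function.ExtendByZero.linearMap k (Fin.castAdd s)) 0 (Fin.natAdd m t) = 0 := by
  have : ¬∃ j, Fin.castAdd s j = Fin.natAdd m t := by
    rintro ⟨j, hj⟩
    exact absurd (congrArg Fin.val hj) (by simp only [Fin.val_castAdd, Fin.val_natAdd]; omega)
  simp [affineSubst, Function.extend_apply' _ _ _ this]

end ExtendByZero

section SchmidtDecomposition

variable {k σ τ : Type*} [CommRing k] {d r : ℕ}

def HasSchmidtDecomposition (d : ℕ) (P : MvPolynomial σ k) (r : ℕ) : Prop :=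
  ∃ Q R : Fin r → MvPolynomial σ k,
    (∀ i, (Q i).totalDegree < d ∧ (R i).totalDegree < d) ∧ P = ∑ i, Q i * R i

theorem schmidtRank_eq_zero_of_forall_not {P : MvPolynomial σ k}
    (h : ∀ r, ¬HasSchmidtDecomposition d P r) : schmidtRank d P = 0 := by
  show sInf {r | HasSchmidtDecomposition d P r} = 0
  simp [h]

theorem schmidtRank_le_add_of_forall {P : MvPolynomial σ k} {Q : MvPolynomial τ k} {s : ℕ}
    (hQ : ∃ r, HasSchmidtDecomposition d Q r)
    (h : ∀ r, HasSchmidtDecomposition d Q r → ∃ r' ≤ r + s, HasSchmidtDecomposition d P r') :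
    schmidtRank d P ≤ schmidtRank d Q + s := by
  obtain ⟨r', hr', hP⟩ := h _ (Nat.sInf_mem hQ)
  exact (Nat.sInf_le hP).trans hr'

namespace HasSchmidtDecomposition

variable {P P₁ P₂ : MvPolynomial σ k} {r₁ r₂ : ℕ}

theorem map (φ : MvPolynomial σ k →ₐ[k] MvPolynomial τ k)
    (hφ : ∀ p, (φ p).totalDegree ≤ p.totalDegree) (h : HasSchmidtDecomposition d P r) :
    HasSchmidtDecomposition d (φ P) r := by
  obtain ⟨Q, R, hQR, rfl⟩ := h
  refine ⟨fun i => φ (Q i), fun i => φ (R i), fun i =>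
    ⟨(hφ _).trans_lt (hQR i).1, (hφ _).trans_lt (hQR i).2⟩, ?_⟩
  simp only [map_sum, map_mul]

theorem add (h₁ : HasSchmidtDecomposition d P₁ r₁) (h₂ : HasSchmidtDecomposition d P₂ r₂) :
    HasSchmidtDecomposition d (P₁ + P₂) (r₁ + r₂) := by
  obtain ⟨Q₁, R₁, hQR₁, rfl⟩ := h₁
  obtain ⟨Q₂, R₂, hQR₂, rfl⟩ := h₂
  refine ⟨Fin.append Q₁ Q₂, Fin.append R₁ R₂, fun i => ?_, by simp [Fin.sum_univ_add]⟩
  induction i using Fin.addCases with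
  | left i => simpa using hQR₁ i
  | right i => simpa using hQR₂ i

theorem totalDegree_eq_zero (hd : d ≤ 1) (h : HasSchmidtDecomposition d P r) :
    P.totalDegree = 0 := by
  obtain ⟨Q, R, hQR, rfl⟩ := h
  refine Nat.eq_zero_of_le_zero ((totalDegree_finsetSum _ _).trans (Finset.sup_le fun i _ => ?_))
  exact (totalDegree_mul _ _).trans (by have := hQR i; omega)

theorem of_aeval_of_totalDegree_eq_zero {w : σ → MvPolynomial τ k} (hP : P.totalDegree = 0)
    (h : HasSchmidtDecomposition d (aeval w P) r) : HasSchmidtDecomposition d P r := by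
  rw [totalDegree_eq_zero_iff_eq_C] at hP
  rw [hP, aeval_C, algebraMap_eq] at h
  rw [hP]
  simpa using h.map (aeval fun _ => 0)
    (totalDegree_aeval_le_of_totalDegree_le_one fun _ => by simp)

theorem of_aeval_affineSubst_extendByZero {m s : ℕ} (hd : 2 ≤ d)
    {F : MvPolynomial (Fin (m + s)) k} (hF : F.totalDegree ≤ d)
    (h : HasSchmidtDecomposition d
      (aeval (affineSubst (Function.ExtendByZero.linearMap k (Fin.castAdd s)) 0) F) r) :
    HasSchmidtDecomposition d F (r + s) := by
  obtain ⟨F₀, G, hFG, hG⟩ := exists_eq_rename_castAdd_add_sum_X_natAdd_mul F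
  have hrestrict :
      aeval (affineSubst (Function.ExtendByZero.linearMap k (Fin.castAdd s)) 0) F = F₀ := by
    rw [hFG, map_add, aeval_rename, map_sum]
    simp [Function.comp_def, affineSubst_extendByZero_castAdd, affineSubst_extendByZero_natAdd]
  rw [hrestrict] at h
  rw [hFG]
  refine (h.map (rename _) (totalDegree_rename_le _)).add
    ⟨fun t => X (Fin.natAdd m t), G, fun t => ⟨?_, (hG t).trans_lt (by omega)⟩, rfl⟩
  exact (totalDegree_monomial_le (Finsupp.single _ 1) (1 : k)).trans_lt
    (by simp only [id_eq, Finsupp.sum_single_index]; omega)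

end HasSchmidtDecomposition

end SchmidtDecomposition

theorem HasSchmidtDecomposition.of_aeval_affineSubst {k : Type*} [Field k] {m s d r : ℕ}
    (hd : 2 ≤ d)
    {P : MvPolynomial (Fin (m + s)) k} (hP : P.totalDegree ≤ d)
    {A : (Fin m → k) →ₗ[k] (Fin (m + s) → k)} (hA : Function.Injective A) (c : Fin (m + s) → k)
    (h : HasSchmidtDecomposition d (aeval (affineSubst A c) P) r) :
    HasSchmidtDecomposition d P (r + s) := by
  obtain ⟨T, hT⟩ := LinearMap.exists_linearEquiv_comp_eq
    (f := Function.ExtendByZero.linearMap k (Fin.castAdd s))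
    (Function.extend_injective (Fin.castAdd_injective m s) 0) hA
  have hrestrict : aeval (affineSubst (Function.ExtendByZero.linearMap k (Fin.castAdd s)) 0)
      (aeval (affineSubst T.toLinearMap c) P) = aeval (affineSubst A c) P := by
    rw [aeval_aeval_affineSubst, hT, map_zero, zero_add]
  rw [← hrestrict] at h
  rw [← aeval_affineSubst_symm_aeval_affineSubst T c P]
  refine (h.of_aeval_affineSubst_extendByZero hd ?_).map _
    (totalDegree_aeval_affineSubst_le _ _)
  exact (totalDegree_aeval_affineSubst_le _ _ P).trans hP

theorem stmt_8_general {k : Type*} [Field k] (n m s d : ℕ)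
    (hcodim : m + s = n)
    (P : MvPolynomial (Fin n) k) (hdeg : P.totalDegree ≤ d)
    (A : (Fin m → k) →ₗ[k] (Fin n → k)) (hA : Function.Injective A)
    (c : Fin n → k)
    (Psub : MvPolynomial (Fin m) k)
    (hPsub : Psub = MvPolynomial.aeval
      (fun i : Fin n =>
        (∑ j : Fin m, MvPolynomial.C (A (Pi.single j 1) i) * MvPolynomial.X j)
          + MvPolynomial.C (c i)) P) :
    schmidtRank d P - s ≤ schmidtRank d Psub := by
  subst hcodim
  replace hPsub : Psub = aeval (affineSubst A c) P := hPsub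
  by_cases hP : ∃ r, HasSchmidtDecomposition d P r
  · suffices schmidtRank d P ≤ schmidtRank d Psub + s by omega
    refine schmidtRank_le_add_of_forall
      (hP.imp fun r h => hPsub ▸ h.map _ (totalDegree_aeval_affineSubst_le A c)) fun r hr => ?_
    rw [hPsub] at hr
    rcases lt_or_ge d 2 with hd | hd
    · exact ⟨r, by omega, .of_aeval_of_totalDegree_eq_zero
        (hP.choose_spec.totalDegree_eq_zero (by omega)) hr⟩
    · exact ⟨r + s, le_rfl, .of_aeval_affineSubst hd hdeg hA c hr⟩
  · rw [schmidtRank_eq_zero_of_forall_not (not_exists.mp hP), Nat.zero_sub]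
    exact Nat.zero_le _

/-- over a finite field of characteristic `> d`, the Schmidt rank of
the restriction of a degree-`≤ d` polynomial `P` to an affine subspace `W` of
codimension `s` (parametrized by an injective affine map `x ↦ A x + c`) is at
least `r(P) − s`. -/
theorem stmt_8 {k : Type*} [Field k] [Fintype k] (q n m s d : ℕ)
    (hq : Fintype.card k = q) (hchar : d < ringChar k)
    (hcodim : m + s = n)
    (P : MvPolynomial (Fin n) k) (hdeg : P.totalDegree ≤ d)
    (A : (Fin m → k) →ₗ[k] (Fin n → k)) (hA : Function.Injective A)
    (c : Fin n → k)
    (Psub : MvPolynomial (Fin m) k)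
    (hPsub : Psub = MvPolynomial.aeval
      (fun i : Fin n =>
        (∑ j : Fin m, MvPolynomial.C (A (Pi.single j 1) i) * MvPolynomial.X j)
          + MvPolynomial.C (c i)) P) :
    schmidtRank d P - s ≤ schmidtRank d Psub :=
  stmt_8_general n m s d hcodim P hdeg A hA c Psub hPsub
end
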